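/- Decomposition formula for the opposite gerbe-twisted multilinear product M^op: for all 0 ≤ p < q ≤ k and all elements y_r, z_r ∈ A_r (r = 0, …, k), one has M^op_{(k,k−1,…,0)}( y_k z_k ⊗ y_{k−1} z_{k−1} ⊗ ⋯ ⊗ y_0 z_0 ) = M^op_{(k,…,q+1,q,p,p−1,…,0)}( y_k z_k ⊗ ⋯ ⊗ y_{q+1} z_{q+1} ⊗ z_q ⊗ y_p·W' ⊗ y_{p−1} z_{p−1} ⊗ ⋯ ⊗ y_0 z_0 ), where the outer product is taken along the index sequence (k, …, q+1, q, p, p−1, …, 0), the slot of index q receives z_q, the slot of index p receives y_p·W', and W' := M^op_{(q,q−1,…,p)}( y_q ⊗ y_{q−1} z_{q−1} ⊗ ⋯ ⊗ y_{p+1} z_{p+1} ⊗ z_p ) ∈ A_p. -/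

import Mathlib

/-!
Split the product at the slots `q` and `p`. The part below slot `q` enters only through its
value, so it suffices to treat the segment from `q` down to `p`. There the conjugation rule
`G_{bp} ∘ G_{pi} = Ad(c_{bpi}) ∘ G_{bi}` and the cocycle identity
`G_{bp}(c_{pji}) c_{bpi} = c_{bpj} c_{bji}` show that `G_{bp}(W') c_{bpq}` is the segment taken
with `y_q` in place of `y_q z_q` and `G_{bp}(z_p)` in place of `G_{bp}(y_p z_p)`. Multiplying by
`G_{bp}(y_p)` on the left and by `G_{bq}(z_q)` on the right recovers the original segment.
-/

section

variable {R : Type} [CommRing R] {A : ℕ → Type} [∀ i, Ring (A i)] [∀ i, Algebra R (A i)]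

/-- The opposite gerbe-twisted product `M^op_{(i_0,…,i_m)}(u_0 ⊗ ⋯ ⊗ u_m)` along a (decreasing)
list of slots `[(i_0,u_0), …, (i_{m−1},u_{m−1})]` with base value `last = u_m ∈ A b`:
`u_m · G_{b,i_{m−1}}(u_{m−1}) · c_{b,i_{m−1},i_{m−2}} · G_{b,i_{m−2}}(u_{m−2}) ⋯ c_{b,i_1,i_0} · G_{b,i_0}(u_0)`. -/
def Mop (G : ∀ i j : ℕ, A j →ₐ[R] A i) (c : ∀ i j l : ℕ, (A i)ˣ) (b : ℕ) (last : A b) :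
    List ((i : ℕ) × A i) → A b
  | [] => last
  | [⟨i, u⟩] => last * G b i u
  | ⟨i, u⟩ :: ⟨j, v⟩ :: rest =>
      Mop G c b last (⟨j, v⟩ :: rest) * ((c b j i : (A b)ˣ) : A b) * G b i u

/-- The decreasing list of indices `[a, a−1, …, b]` (empty when `b > a`). -/
def descIdx (a b : ℕ) : List ℕ := ((List.range (a + 1 - b)).map (fun t => b + t)).reverse

lemma descIdx_eq_reverse_range' (a b : ℕ) : descIdx a b = (List.range' b (a + 1 - b)).reverse := by
  rw [descIdx, List.range'_eq_map_range]

lemma descIdx_eq_cons {a b : ℕ} (ha : 1 ≤ a) (hba : b ≤ a) :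
    descIdx a b = a :: descIdx (a - 1) b := by
  obtain ⟨a, rfl⟩ : ∃ t, a = t + 1 := ⟨a - 1, by omega⟩
  rw [descIdx_eq_reverse_range', descIdx_eq_reverse_range',
    show a + 1 + 1 - b = (a + 1 - b) + 1 by omega, List.range'_1_concat, List.reverse_append,
    show b + (a + 1 - b) = a + 1 by omega]
  simp

lemma descIdx_eq_concat {a b : ℕ} (hba : b ≤ a) : descIdx a b = descIdx a (b + 1) ++ [b] := by
  rw [descIdx_eq_reverse_range', descIdx_eq_reverse_range',
    show a + 1 - b = (a + 1 - (b + 1)) + 1 by omega, List.range'_succ, List.reverse_cons]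

lemma descIdx_append {a m b : ℕ} (hbm : b ≤ m + 1) (hma : m ≤ a) :
    descIdx a b = descIdx a (m + 1) ++ descIdx m b := by
  rw [descIdx_eq_reverse_range', descIdx_eq_reverse_range', descIdx_eq_reverse_range',
    ← List.reverse_append, show a + 1 - b = (m + 1 - b) + (a + 1 - (m + 1)) by omega,
    ← List.range'_append_1, show b + (m + 1 - b) = m + 1 by omega]

lemma descIdx_pairwise_gt (a b : ℕ) : (descIdx a b).Pairwise (· > ·) := by
  rw [descIdx_eq_reverse_range', List.pairwise_reverse]
  exact List.pairwise_lt_range'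

lemma pairwise_ge_cons_map_descIdx_concat {B : ℕ → Type*} {p q : ℕ} (hpq : p < q) (u : B q)
    (f : ∀ r, B r) :
    (((⟨q, u⟩ : (i : ℕ) × B i) :: (descIdx (q - 1) (p + 1)).map (fun r => ⟨r, f r⟩)).map
      Sigma.fst ++ [p]).Pairwise (· ≥ ·) := by
  simp only [List.map_cons, List.map_map, Function.comp_def, List.map_id']
  rw [← descIdx_eq_cons (by omega) (by omega), ← descIdx_eq_concat hpq.le]
  exact (descIdx_pairwise_gt q p).imp le_of_lt

section Mop

variable (G : ∀ i j : ℕ, A j →ₐ[R] A i) (c : ∀ i : ℕ, ℕ → ℕ → (A i)ˣ)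

@[simp] lemma Mop_nil (b : ℕ) (X : A b) : Mop G c b X [] = X := rfl

@[simp] lemma Mop_singleton (b i : ℕ) (X : A b) (u : A i) :
    Mop G c b X [⟨i, u⟩] = X * G b i u := rfl

@[simp] lemma Mop_cons_cons (b i j : ℕ) (X : A b) (u : A i) (v : A j)
    (L : List ((i : ℕ) × A i)) :
    Mop G c b X (⟨i, u⟩ :: ⟨j, v⟩ :: L) = Mop G c b X (⟨j, v⟩ :: L) * (c b j i : A b) * G b i u :=
  rfl

lemma Mop_mul_left (b : ℕ) (x X : A b) : ∀ L, Mop G c b (x * X) L = x * Mop G c b X L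
  | [] => rfl
  | [⟨i, u⟩] => mul_assoc _ _ _
  | ⟨i, u⟩ :: ⟨j, v⟩ :: L => by
      simp only [Mop_cons_cons, Mop_mul_left b x X (⟨j, v⟩ :: L), mul_assoc]

lemma Mop_cons_mul (b q : ℕ) (X : A b) (u v : A q) :
    ∀ L, Mop G c b X (⟨q, u * v⟩ :: L) = Mop G c b X (⟨q, u⟩ :: L) * G b q v
  | [] => by simp [mul_assoc]
  | ⟨j, w⟩ :: L => by simp [mul_assoc]

lemma Mop_append_cons (b : ℕ) (X : A b) (j : ℕ) (v : A j) :
    ∀ L₁ L₂ : List ((i : ℕ) × A i),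
      Mop G c b X (L₁ ++ ⟨j, v⟩ :: L₂) = Mop G c b (Mop G c b X (⟨j, v⟩ :: L₂)) (L₁ ++ [⟨j, 1⟩])
  | [], L₂ => by simp
  | [⟨i, u⟩], L₂ => by simp
  | ⟨i, u⟩ :: ⟨i', u'⟩ :: L₁, L₂ => by
      have ih := Mop_append_cons b X j v (⟨i', u'⟩ :: L₁) L₂
      simp only [List.cons_append, Mop_cons_cons] at ih ⊢
      rw [ih]

lemma Mop_append_cons_congr {b j : ℕ} {X X' : A b} {v v' : A j} {L₂ L₂' : List ((i : ℕ) × A i)}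
    (h : Mop G c b X (⟨j, v⟩ :: L₂) = Mop G c b X' (⟨j, v'⟩ :: L₂')) (L₁ : List ((i : ℕ) × A i)) :
    Mop G c b X (L₁ ++ ⟨j, v⟩ :: L₂) = Mop G c b X' (L₁ ++ ⟨j, v'⟩ :: L₂') := by
  rw [Mop_append_cons, h, ← Mop_append_cons]

lemma Mop_decompose_at_base (b q : ℕ) (y z : A b) (u v : A q) (L : List ((i : ℕ) × A i)) :
    Mop G c b (y * z) (⟨q, u * v⟩ :: L) = Mop G c b (y * Mop G c b z (⟨q, u⟩ :: L)) [⟨q, v⟩] := by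
  rw [Mop_cons_mul, Mop_mul_left, Mop_singleton]

def ConjCompatible : Prop :=
  ∀ i j l : ℕ, i ≤ j → j ≤ l → ∀ x : A l,
    G i j (G j l x) = (c i j l : A i) * G i l x * (((c i j l)⁻¹ : (A i)ˣ) : A i)

def CocycleCondition : Prop :=
  ∀ i j l m : ℕ, i ≤ j → j ≤ l → l ≤ m →
    (c i j l : A i) * (c i l m : A i) = G i j (c j l m : A j) * (c i j m : A i)

variable {G c}

/-- Pushing a product based at `p` down to `b ≤ p` turns its base into one more slot. -/
lemma map_Mop_mul_c (hconj : ConjCompatible G c) (hcc : CocycleCondition G c) {b p : ℕ}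
    (hbp : b ≤ p) (w : A p) :
    ∀ (i : ℕ) (u : A i) (L : List ((i : ℕ) × A i)),
      (((⟨i, u⟩ :: L).map Sigma.fst) ++ [p]).Pairwise (· ≥ ·) →
      G b p (Mop G c p w (⟨i, u⟩ :: L)) * (c b p i : A b)
        = Mop G c b (G b p w) (⟨i, u⟩ :: L ++ [⟨p, 1⟩])
  | i, u, [], h => by
      have hpi : p ≤ i := List.rel_of_pairwise_cons h (by simp)
      simp [hconj b p i hbp hpi, mul_assoc]
  | i, u, ⟨j, v⟩ :: L, h => by
      have hji : j ≤ i := List.rel_of_pairwise_cons h (by simp)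
      have hpj : p ≤ j := List.rel_of_pairwise_cons h.of_cons (by simp)
      have ih := map_Mop_mul_c hconj hcc hbp w j v L h.of_cons
      calc G b p (Mop G c p w (⟨i, u⟩ :: ⟨j, v⟩ :: L)) * (c b p i : A b)
          = G b p (Mop G c p w (⟨j, v⟩ :: L)) * (G b p (c p j i : A p) * c b p i) * G b i u := by
            simp [hconj b p i hbp (hpj.trans hji), mul_assoc]
        _ = G b p (Mop G c p w (⟨j, v⟩ :: L)) * c b p j * c b j i * G b i u := by
            rw [← hcc b p j i hbp hpj hji]
            simp only [mul_assoc]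
        _ = Mop G c b (G b p w) (⟨i, u⟩ :: ⟨j, v⟩ :: L ++ [⟨p, 1⟩]) := by
            rw [ih]
            rfl

lemma Mop_decompose (hconj : ConjCompatible G c) (hcc : CocycleCondition G c) {b p q : ℕ}
    (hbp : b ≤ p) (X : A b) (yq zq : A q) (yp zp : A p) (mid T : List ((i : ℕ) × A i))
    (hmid : (((⟨q, yq⟩ :: mid).map Sigma.fst) ++ [p]).Pairwise (· ≥ ·)) :
    Mop G c b X (⟨q, yq * zq⟩ :: (mid ++ ⟨p, yp * zp⟩ :: T))
      = Mop G c b X (⟨q, zq⟩ :: ⟨p, yp * Mop G c p zp (⟨q, yq⟩ :: mid)⟩ :: T) :=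
  calc Mop G c b X (⟨q, yq * zq⟩ :: (mid ++ ⟨p, yp * zp⟩ :: T))
      = Mop G c b (Mop G c b X (⟨p, yp⟩ :: T) * G b p zp) (⟨q, yq⟩ :: mid ++ [⟨p, 1⟩])
          * G b q zq := by
        rw [← List.cons_append, Mop_append_cons, Mop_cons_mul, List.cons_append, Mop_cons_mul]
        rfl
    _ = Mop G c b X (⟨p, yp⟩ :: T) * (G b p (Mop G c p zp (⟨q, yq⟩ :: mid)) * c b p q)
          * G b q zq := by
        rw [Mop_mul_left, map_Mop_mul_c hconj hcc hbp zp q yq mid hmid]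
    _ = Mop G c b X (⟨q, zq⟩ :: ⟨p, yp * Mop G c p zp (⟨q, yq⟩ :: mid)⟩ :: T) := by
        rw [Mop_cons_cons, Mop_cons_mul]
        simp only [mul_assoc]

end Mop

theorem Mop_decomposition_general
    (G : ∀ i j : ℕ, A j →ₐ[R] A i) (c : ∀ i j l : ℕ, (A i)ˣ)
    (hconj : ∀ i j l : ℕ, i ≤ j → j ≤ l → ∀ x : A l,
      G i j (G j l x) = (c i j l : A i) * G i l x * (((c i j l)⁻¹ : (A i)ˣ) : A i))
    (hcc : ∀ i j l m : ℕ, i ≤ j → j ≤ l → l ≤ m →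
      (c i j l : A i) * (c i l m : A i) = G i j (c j l m : A j) * (c i j m : A i))
    (k p q : ℕ) (hpq : p < q) (hqk : q ≤ k)
    (y z : ∀ r : ℕ, A r) :
    Mop G c 0 (y 0 * z 0)
        ((descIdx k 1).map (fun r => (⟨r, y r * z r⟩ : (i : ℕ) × A i)))
      = (if hp : p = 0 then
          Mop G c 0
            (y 0 *
              (cast (congrArg A hp)
                (Mop G c p (z p)
                  (⟨q, y q⟩ ::
                    (descIdx (q - 1) (p + 1)).map (fun r => (⟨r, y r * z r⟩ : (i : ℕ) × A i))))))
            (((descIdx k (q + 1)).map (fun r => (⟨r, y r * z r⟩ : (i : ℕ) × A i)))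
              ++ [⟨q, z q⟩])
        else
          Mop G c 0 (y 0 * z 0)
            (((descIdx k (q + 1)).map (fun r => (⟨r, y r * z r⟩ : (i : ℕ) × A i)))
              ++ [⟨q, z q⟩,
                  ⟨p, y p *
                      (Mop G c p (z p)
                        (⟨q, y q⟩ ::
                          (descIdx (q - 1) (p + 1)).map
                            (fun r => (⟨r, y r * z r⟩ : (i : ℕ) × A i))))⟩]
              ++ (descIdx (p - 1) 1).map (fun r => (⟨r, y r * z r⟩ : (i : ℕ) × A i)))) := by
  have hq : 1 ≤ q := by omega
  rw [descIdx_append (show 1 ≤ q + 1 by omega) hqk, descIdx_eq_cons hq hq, List.map_append,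
    List.map_cons]
  by_cases hp : p = 0
  · subst hp
    rw [dif_pos rfl, cast_eq]
    exact Mop_append_cons_congr G c (Mop_decompose_at_base G c 0 q (y 0) (z 0) (y q) (z q) _) _
  · rw [dif_neg hp, descIdx_append (show 1 ≤ p + 1 by omega) (show p ≤ q - 1 by omega),
      descIdx_eq_cons (show 1 ≤ p by omega) (show 1 ≤ p by omega), List.map_append, List.map_cons]
    simp only [List.append_assoc, List.cons_append, List.nil_append]
    exact Mop_append_cons_congr G c
      (Mop_decompose hconj hcc (Nat.zero_le p) _ _ _ _ _ _ _
        (pairwise_ge_cons_map_descIdx_concat hpq (y q) fun r => y r * z r)) _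

/-- Decomposition formula for the opposite gerbe-twisted multilinear product
`M^op`: for `0 ≤ p < q ≤ k` and `y_r, z_r ∈ A_r`,
`M^op_{(k,…,0)}(y_k z_k ⊗ ⋯ ⊗ y_0 z_0)
  = M^op_{(k,…,q+1,q,p,…,0)}(y_k z_k ⊗ ⋯ ⊗ y_{q+1}z_{q+1} ⊗ z_q ⊗ y_p·W' ⊗ y_{p−1}z_{p−1} ⊗ ⋯ ⊗ y_0 z_0)`
where `W' = M^op_{(q,…,p)}(y_q ⊗ y_{q−1}z_{q−1} ⊗ ⋯ ⊗ y_{p+1}z_{p+1} ⊗ z_p)`. -/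
theorem Mop_decomposition
    (G : ∀ i j : ℕ, A j →ₐ[R] A i) (c : ∀ i j l : ℕ, (A i)ˣ)
    (hGid : ∀ (i : ℕ) (x : A i), G i i x = x)
    (hconj : ∀ i j l : ℕ, i ≤ j → j ≤ l → ∀ x : A l,
      G i j (G j l x) = (c i j l : A i) * G i l x * (((c i j l)⁻¹ : (A i)ˣ) : A i))
    (hciil : ∀ i l : ℕ, i ≤ l → c i i l = 1)
    (hcill : ∀ i l : ℕ, i ≤ l → c i l l = 1)
    (hcc : ∀ i j l m : ℕ, i ≤ j → j ≤ l → l ≤ m →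
      (c i j l : A i) * (c i l m : A i) = G i j (c j l m : A j) * (c i j m : A i))
    (k p q : ℕ) (hpq : p < q) (hqk : q ≤ k)
    (y z : ∀ r : ℕ, A r) :
    Mop G c 0 (y 0 * z 0)
        ((descIdx k 1).map (fun r => (⟨r, y r * z r⟩ : (i : ℕ) × A i)))
      = (if hp : p = 0 then
          Mop G c 0
            (y 0 *
              (cast (congrArg A hp)
                (Mop G c p (z p)
                  (⟨q, y q⟩ ::
                    (descIdx (q - 1) (p + 1)).map (fun r => (⟨r, y r * z r⟩ : (i : ℕ) × A i))))))
            (((descIdx k (q + 1)).map (fun r => (⟨r, y r * z r⟩ : (i : ℕ) × A i)))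
              ++ [⟨q, z q⟩])
        else
          Mop G c 0 (y 0 * z 0)
            (((descIdx k (q + 1)).map (fun r => (⟨r, y r * z r⟩ : (i : ℕ) × A i)))
              ++ [⟨q, z q⟩,
                  ⟨p, y p *
                      (Mop G c p (z p)
                        (⟨q, y q⟩ ::
                          (descIdx (q - 1) (p + 1)).map
                            (fun r => (⟨r, y r * z r⟩ : (i : ℕ) × A i))))⟩]
              ++ (descIdx (p - 1) 1).map (fun r => (⟨r, y r * z r⟩ : (i : ℕ) × A i)))) :=
  Mop_decomposition_general G c hconj hcc k p q hpq hqk y z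

end
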